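/- Let A be a nonreductive line arrangement of 12 pairwise distinct lines in ℂP² with exactly one point p of multiplicity 6, with n_4(A) = n_5(A) = 0 and n_r(A) = 0 for all r ≥ 7, and such that every point of multiplicity 3 lies on one of the six lines of A passing through p. Then no line of A that does not pass through p contains exactly 6 points of multiplicity 3 of A. -/

import Mathlib

open Submodule Module

/-- The underlying vector space `ℂ³` for the linear model of `ℂP²`. -/
abbrev Vc : Type := Fin 3 → ℂ

/-- A projective point of `ℂP²`: a 1-dimensional `ℂ`-subspace of `ℂ³`. -/
def IsProjPoint (p : Submodule ℂ Vc) : Prop := Module.finrank ℂ p = 1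

/-- A projective line of `ℂP²`: a 2-dimensional `ℂ`-subspace of `ℂ³`. -/
def IsProjLine (L : Submodule ℂ Vc) : Prop := Module.finrank ℂ L = 2

/-- A line arrangement: a finite set of (pairwise distinct) projective lines. -/
def LineArrangement (A : Finset (Submodule ℂ Vc)) : Prop := ∀ L ∈ A, IsProjLine L

/-- The multiplicity of a projective point `p` with respect to `A`:
the number of lines of `A` containing `p`. -/
noncomputable def mult (A : Finset (Submodule ℂ Vc)) (p : Submodule ℂ Vc) : ℕ :=
  Set.ncard {L : Submodule ℂ Vc | L ∈ A ∧ p ≤ L}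

/-- `nPts A r` is the number of projective points of multiplicity exactly `r` w.r.t. `A`. -/
noncomputable def nPts (A : Finset (Submodule ℂ Vc)) (r : ℕ) : ℕ :=
  Set.ncard {p : Submodule ℂ Vc | IsProjPoint p ∧ mult A p = r}

/-- A multiple point of `A`: a projective point of multiplicity at least 3. -/
def IsMultPoint (A : Finset (Submodule ℂ Vc)) (p : Submodule ℂ Vc) : Prop :=
  IsProjPoint p ∧ 3 ≤ mult A p

/-- `A` is nonreductive if every line of `A` contains at least 3 multiple points of `A`. -/
def Nonreductive (A : Finset (Submodule ℂ Vc)) : Prop :=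
  ∀ L ∈ A, 3 ≤ Set.ncard {p : Submodule ℂ Vc | IsMultPoint A p ∧ p ≤ L}

/-- The projective line `{aX + bY + cZ = 0}`. -/
noncomputable def lineEq (a b c : ℂ) : Submodule ℂ Vc :=
  LinearMap.ker (a • (LinearMap.proj 0 : Vc →ₗ[ℂ] ℂ) + b • (LinearMap.proj 1 : Vc →ₗ[ℂ] ℂ)
    + c • (LinearMap.proj 2 : Vc →ₗ[ℂ] ℂ))

/-- Lattice isomorphism of two arrangements of `n` lines. -/
def LatticeIso (n : ℕ) (A B : Finset (Submodule ℂ Vc)) : Prop :=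
  ∃ L H : Fin n → Submodule ℂ Vc,
    Function.Injective L ∧ Function.Injective H ∧
    (∀ M, M ∈ A ↔ ∃ i, L i = M) ∧ (∀ M, M ∈ B ↔ ∃ i, H i = M) ∧
    ∀ S : Finset (Fin n), S.Nonempty →
      Module.finrank ℂ ↥(⨅ i ∈ S, L i) = Module.finrank ℂ ↥(⨅ i ∈ S, H i)

/-- Projective equivalence of two arrangements. -/
def ProjEquiv (A B : Finset (Submodule ℂ Vc)) : Prop :=
  ∃ g : Vc ≃ₗ[ℂ] Vc,
    (fun M => Submodule.map (g : Vc →ₗ[ℂ] Vc) M) '' (A : Set (Submodule ℂ Vc))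
      = (B : Set (Submodule ℂ Vc))

/-!
Six lines of `A` pass through `p`, so besides `M` only five lines of `A` avoid `p`. A triple
point `q` of `M` lies on `M`, on a line through `p`, and on a third line, which cannot pass
through `p` since `p ∉ M` and two distinct lines meet in a single point. That third line
meets `M` exactly in `q`, so the triple points of `M` are among the intersections of `M` with
those five lines.
-/

lemma IsProjPoint.eq_inf {q L M : Submodule ℂ Vc} (hq : IsProjPoint q) (hL : IsProjLine L)
    (hM : IsProjLine M) (hLM : L ≠ M) (hqL : q ≤ L) (hqM : q ≤ M) : q = L ⊓ M := by
  have hLsup : L < L ⊔ M := by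
    refine lt_of_le_of_ne le_sup_left fun h => hLM ?_
    exact (eq_of_le_of_finrank_eq (h ▸ le_sup_right) (by rw [hM, hL])).symm
  have hsup_le : finrank ℂ ↥(L ⊔ M) ≤ 3 := (finrank_le (L ⊔ M)).trans_eq (by simp)
  have hsup_gt := finrank_lt_finrank_of_lt hLsup
  have hdim := finrank_sup_add_finrank_inf_eq L M
  rw [IsProjLine] at hL hM
  exact eq_of_le_of_finrank_eq (le_inf hqL hqM) (by rw [hq]; omega)

section

open scoped Classical

lemma mult_eq_card_filter (A : Finset (Submodule ℂ Vc)) (q : Submodule ℂ Vc) :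
    mult A q = (A.filter (q ≤ ·)).card := by
  rw [mult, ← Set.ncard_coe_finset, Finset.coe_filter]

lemma card_filter_not_le (A : Finset (Submodule ℂ Vc)) (p : Submodule ℂ Vc) :
    (A.filter (¬ p ≤ ·)).card = A.card - mult A p := by
  rw [mult_eq_card_filter, ← Finset.card_filter_add_card_filter_not (s := A) (p ≤ ·)]
  omega

lemma exists_mem_ne_ne_of_two_lt_mult {A : Finset (Submodule ℂ Vc)} {q : Submodule ℂ Vc}
    (hq : 2 < mult A q) (L M : Submodule ℂ Vc) : ∃ N ∈ A, q ≤ N ∧ N ≠ L ∧ N ≠ M := by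
  rw [mult_eq_card_filter] at hq
  have hpos : 0 < (((A.filter (q ≤ ·)).erase L).erase M).card := by
    have := Finset.pred_card_le_card_erase (s := (A.filter (q ≤ ·)).erase L) (a := M)
    have := Finset.pred_card_le_card_erase (s := A.filter (q ≤ ·)) (a := L)
    omega
  obtain ⟨N, hN⟩ := Finset.card_pos.mp hpos
  simp only [Finset.mem_erase, Finset.mem_filter] at hN
  exact ⟨N, hN.2.2.1, hN.2.2.2, hN.2.1, hN.1⟩

lemma triple_points_subset_image_inf {A : Finset (Submodule ℂ Vc)} (hA : LineArrangement A)
    {p : Submodule ℂ Vc} (hp : IsProjPoint p)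
    (hpencil : ∀ q : Submodule ℂ Vc, IsProjPoint q → mult A q = 3 →
      ∃ L ∈ A, p ≤ L ∧ q ≤ L)
    {M : Submodule ℂ Vc} (hM : M ∈ A) (hpM : ¬ p ≤ M) :
    {q : Submodule ℂ Vc | IsProjPoint q ∧ mult A q = 3 ∧ q ≤ M} ⊆
      (· ⊓ M) '' ↑((A.filter (¬ p ≤ ·)).erase M) := by
  rintro q ⟨hq, hq3, hqM⟩
  obtain ⟨L, hLA, hpL, hqL⟩ := hpencil q hq hq3
  obtain ⟨N, hNA, hqN, hNL, hNM⟩ :=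
    exists_mem_ne_ne_of_two_lt_mult (by omega : 2 < mult A q) L M
  have hpN : ¬ p ≤ N := fun hpN => by
    have hpq : p = q := by
      rw [hp.eq_inf (hA N hNA) (hA L hLA) hNL hpN hpL,
        hq.eq_inf (hA N hNA) (hA L hLA) hNL hqN hqL]
    exact hpM (hpq ▸ hqM)
  refine ⟨N, ?_, (hq.eq_inf (hA N hNA) (hA M hM) hNM hqN hqM).symm⟩
  simp [hNM, hNA, hpN]

end

theorem no_line_with_six_triple_points_general (A : Finset (Submodule ℂ Vc))
    (hA : LineArrangement A) (hcard : A.card = 12)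
    (p : Submodule ℂ Vc) (hp : IsProjPoint p) (hmp : mult A p = 6)
    (hpencil : ∀ q : Submodule ℂ Vc, IsProjPoint q → mult A q = 3 →
      ∃ L ∈ A, p ≤ L ∧ q ≤ L) :
    ∀ M ∈ A, ¬ p ≤ M →
      Set.ncard {q : Submodule ℂ Vc | IsProjPoint q ∧ mult A q = 3 ∧ q ≤ M} ≠ 6 := by
  classical
  intro M hM hpM hsix
  have hM' : M ∈ A.filter (¬ p ≤ ·) := Finset.mem_filter.mpr ⟨hM, hpM⟩
  have hfive : ((A.filter (¬ p ≤ ·)).erase M).card = 5 := by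
    rw [Finset.card_erase_of_mem hM', card_filter_not_le, hcard, hmp]
  have : 6 ≤ 5 := calc
    6 = _ := hsix.symm
    _ ≤ ((· ⊓ M) '' ↑((A.filter (¬ p ≤ ·)).erase M)).ncard :=
      Set.ncard_le_ncard (triple_points_subset_image_inf hA hp hpencil hM hpM) (Set.toFinite _)
    _ ≤ ((A.filter (¬ p ≤ ·)).erase M).card :=
      (Set.ncard_image_le (Finset.finite_toSet _)).trans_eq (Set.ncard_coe_finset _)
    _ = 5 := hfive
  omega

/-- In a nonreductive arrangement of 12 lines with exactly one sextic point `p`,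
`n₄ = n₅ = 0`, `n_r = 0` for `r ≥ 7`, and all triple points on the pencil of `p`, no line
avoiding `p` contains exactly 6 triple points. -/
theorem no_line_with_six_triple_points (A : Finset (Submodule ℂ Vc))
    (hA : LineArrangement A) (hcard : A.card = 12) (hnr : Nonreductive A)
    (p : Submodule ℂ Vc) (hp : IsProjPoint p) (hmp : mult A p = 6)
    (h6 : nPts A 6 = 1) (h4 : nPts A 4 = 0) (h5 : nPts A 5 = 0)
    (h7 : ∀ r, 7 ≤ r → nPts A r = 0)
    (hpencil : ∀ q : Submodule ℂ Vc, IsProjPoint q → mult A q = 3 →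
      ∃ L ∈ A, p ≤ L ∧ q ≤ L) :
    ∀ M ∈ A, ¬ p ≤ M →
      Set.ncard {q : Submodule ℂ Vc | IsProjPoint q ∧ mult A q = 3 ∧ q ≤ M} ≠ 6 :=
  no_line_with_six_triple_points_general A hA hcard p hp hmp hpencil
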